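/- arXiv:2405.10622 — 2 statements merged into one kernel-verified Lean document; each statement's English description precedes it below -/
import Mathlib

section
/- Let Ω be a countable outcome space, let ε ∈ [0,1], and let μ, ν be probability mass functions on Ω such that ν(s) ≤ e^ε · μ(s) for every s ∈ Ω. Let u : Ω → ℝ be a utility function with 0 ≤ u(s) ≤ 1 for all s. Then the expected utility under μ is at least the expected utility under ν minus 2ε, i.e., ∑_s u(s)·μ(s) ≥ ∑_s u(s)·ν(s) − 2ε. (This is the paper's Theorem 1: an ε-differentially private mechanism with utilities in [0,1] is 2ε-truthful, since when a bidder changes their report from d to d', the output distributions μ = M(d), ν = M(d') of an ε-differentially private mechanism satisfy the pointwise bound.) -/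
lemma exp_le_one_add_two_mul (ε : ℝ) (hε0 : 0 ≤ ε) (hε1 : ε ≤ 1) :
    Real.exp ε ≤ 1 + 2 * ε := by
  have h := convexOn_exp.2 (Set.mem_univ (0:ℝ)) (Set.mem_univ (1:ℝ))
    (show (0:ℝ) ≤ 1 - ε by linarith) hε0 (by ring)
  simp only [smul_eq_mul, mul_zero, mul_one, zero_add, Real.exp_zero] at h
  have he : Real.exp 1 ≤ 3 := by
    have := Real.exp_one_lt_d9
    linarith
  nlinarith [h, Real.exp_pos (1:ℝ)]

/-- Paper's Theorem 1: if utilities lie in `[0,1]` and the output distributions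
`μ, ν` of an `ε`-differentially private mechanism satisfy the pointwise bound
`ν s ≤ exp ε * μ s`, then the expected utility under `μ` is at least the
expected utility under `ν` minus `2ε`. -/
theorem dp_implies_two_eps_truthful {Ω : Type*} [Countable Ω]
    (ε : ℝ) (hε0 : 0 ≤ ε) (hε1 : ε ≤ 1)
    (μ ν : Ω → ℝ) (hμ0 : ∀ s, 0 ≤ μ s) (hν0 : ∀ s, 0 ≤ ν s)
    (hμ1 : ∑' s, μ s = 1) (hν1 : ∑' s, ν s = 1)
    (hdp : ∀ s, ν s ≤ Real.exp ε * μ s)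
    (u : Ω → ℝ) (hu0 : ∀ s, 0 ≤ u s) (hu1 : ∀ s, u s ≤ 1) :
    ∑' s, u s * μ s ≥ (∑' s, u s * ν s) - 2 * ε := by
  have hμs : Summable μ := by
    by_contra h
    rw [tsum_eq_zero_of_not_summable h] at hμ1; norm_num at hμ1
  have hνs : Summable ν := by
    by_contra h
    rw [tsum_eq_zero_of_not_summable h] at hν1; norm_num at hν1
  have huμs : Summable (fun s => u s * μ s) :=
    hμs.of_nonneg_of_le (fun s => mul_nonneg (hu0 s) (hμ0 s))
      (fun s => by nlinarith [hu1 s, hμ0 s])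
  have huνs : Summable (fun s => u s * ν s) :=
    hνs.of_nonneg_of_le (fun s => mul_nonneg (hu0 s) (hν0 s))
      (fun s => by nlinarith [hu1 s, hν0 s])
  have hS1 : ∑' s, u s * μ s ≤ 1 := by
    rw [← hμ1]
    exact Summable.tsum_le_tsum (fun s => by nlinarith [hu1 s, hμ0 s]) huμs hμs
  have hS0 : 0 ≤ ∑' s, u s * μ s :=
    tsum_nonneg (fun s => mul_nonneg (hu0 s) (hμ0 s))
  have hkey : ∑' s, u s * ν s ≤ Real.exp ε * ∑' s, u s * μ s := by
    rw [← tsum_mul_left]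
    refine Summable.tsum_le_tsum (fun s => ?_) huνs (huμs.mul_left _)
    have := hdp s
    nlinarith [hu0 s, hν0 s]
  have hexp := exp_le_one_add_two_mul ε hε0 hε1
  have hpos : 0 < Real.exp ε := Real.exp_pos ε
  nlinarith [mul_le_mul_of_nonneg_right hexp hS0]
end

section
/- Let T be a finite nonempty outcome set, ε > 0, Δ > 0, and let w₁, w₂ : T → ℝ be two score functions satisfying |w₁(t) − w₂(t)| ≤ Δ for every t ∈ T. Define, for i = 1, 2, the probability mass function pᵢ(t) = exp(ε·wᵢ(t)/(2Δ)) / ∑_{t'∈T} exp(ε·wᵢ(t')/(2Δ)). Then for every t ∈ T, p₁(t) ≤ e^ε · p₂(t). (The exponential mechanism with sensitivity parameter Δ is ε-differentially private.) -/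
open Finset in
/-- The exponential mechanism with sensitivity parameter `Δ` is
`ε`-differentially private: if two score functions differ pointwise by at
most `Δ`, the induced Gibbs distributions differ by a factor of at most
`exp ε`. -/
theorem exponential_mechanism_dp {T : Type*} [Fintype T] [Nonempty T]
    (ε Δ : ℝ) (hε : 0 < ε) (hΔ : 0 < Δ)
    (w₁ w₂ : T → ℝ) (hw : ∀ t, |w₁ t - w₂ t| ≤ Δ) (t : T) :
    Real.exp (ε * w₁ t / (2 * Δ)) / (∑ t', Real.exp (ε * w₁ t' / (2 * Δ)))
      ≤ Real.exp ε *
        (Real.exp (ε * w₂ t / (2 * Δ)) / (∑ t', Real.exp (ε * w₂ t' / (2 * Δ)))) := by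
  have h2Δ : (0:ℝ) < 2 * Δ := by linarith
  -- pointwise bound in both directions
  have key : ∀ (u v : T → ℝ), (∀ s, u s - v s ≤ Δ) → ∀ s,
      Real.exp (ε * u s / (2 * Δ)) ≤ Real.exp (ε/2) * Real.exp (ε * v s / (2 * Δ)) := by
    intro u v huv s
    rw [← Real.exp_add]
    apply Real.exp_le_exp.mpr
    have : ε * u s / (2 * Δ) - ε * v s / (2 * Δ) ≤ ε / 2 := by
      rw [div_sub_div_same, ← mul_sub, div_le_iff₀ h2Δ]
      have := huv s
      nlinarith
    linarith
  have h12 : ∀ s, w₁ s - w₂ s ≤ Δ := fun s => (abs_le.mp (hw s)).2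
  have h21 : ∀ s, w₂ s - w₁ s ≤ Δ := fun s => by
    have := (abs_le.mp (hw s)).1; linarith
  have hsum1 : (0:ℝ) < ∑ t', Real.exp (ε * w₁ t' / (2 * Δ)) :=
    Finset.sum_pos (fun s _ => Real.exp_pos _) Finset.univ_nonempty
  have hsum2 : (0:ℝ) < ∑ t', Real.exp (ε * w₂ t' / (2 * Δ)) :=
    Finset.sum_pos (fun s _ => Real.exp_pos _) Finset.univ_nonempty
  have hnum : Real.exp (ε * w₁ t / (2 * Δ)) ≤
      Real.exp (ε/2) * Real.exp (ε * w₂ t / (2 * Δ)) := key w₁ w₂ h12 t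
  have hden : (∑ t', Real.exp (ε * w₂ t' / (2 * Δ))) ≤
      Real.exp (ε/2) * ∑ t', Real.exp (ε * w₁ t' / (2 * Δ)) := by
    rw [Finset.mul_sum]
    exact Finset.sum_le_sum fun s _ => key w₂ w₁ h21 s
  rw [← mul_div_assoc, div_le_div_iff₀ hsum1 hsum2]
  calc Real.exp (ε * w₁ t / (2 * Δ)) * ∑ t', Real.exp (ε * w₂ t' / (2 * Δ))
      ≤ (Real.exp (ε/2) * Real.exp (ε * w₂ t / (2 * Δ))) *
        (Real.exp (ε/2) * ∑ t', Real.exp (ε * w₁ t' / (2 * Δ))) := by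
        apply mul_le_mul hnum hden hsum2.le
        positivity
    _ = Real.exp ε * Real.exp (ε * w₂ t / (2 * Δ)) *
        ∑ t', Real.exp (ε * w₁ t' / (2 * Δ)) := by
        rw [show Real.exp ε = Real.exp (ε/2) * Real.exp (ε/2) by rw [← Real.exp_add]; ring_nf]
        ring
end
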